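/- Lipschitz bound for the vortex distribution tested against a smooth function: Let (x_1,…,x_N) be a solution of the point-vortex system with the Euler kernel G_1 on [0,T) with no collapse, and let φ : ℝ² → ℝ be twice continuously differentiable with bounded second derivative. Then for all t ∈ [0,T), |d/dt Σ_{i=1}^N a_i φ(x_i(t))| ≤ (1/(4π)) (Σ_{i≠j} |a_i| |a_j|) · sup_{x∈ℝ²} ‖D²φ(x)‖. In particular t ↦ Σ_{i=1}^N a_i φ(x_i(t)) is Lipschitz on [0,T) and converges as t → T⁻. -/

import Mathlib

open Filter MeasureTheory

noncomputable section

/-- The plane `ℝ²`. -/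
abbrev Plane : Type := EuclideanSpace ℝ (Fin 2)

/-- Counterclockwise rotation by `π/2`: `(v₁, v₂)^⊥ = (−v₂, v₁)`. -/
def perp (v : Plane) : Plane := WithLp.toLp 2 ![-v 1, v 0]

/-- `∇^⊥_y K(|y|) = K'(|y|) y^⊥ / |y|` for a radial kernel profile `K`. -/
def gradPerp (K : ℝ → ℝ) (y : Plane) : Plane := (deriv K ‖y‖ / ‖y‖) • perp y

/-- A solution of the point-vortex system with intensities `a`, kernel profile `G`,
on the time interval `[0, T)`, with no collapse. -/
def IsVortexSolution (N : ℕ) (a : Fin N → ℝ) (G : ℝ → ℝ) (T : ℝ)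
    (x : Fin N → ℝ → Plane) : Prop :=
  (∀ t ∈ Set.Ico (0 : ℝ) T, ∀ i j : Fin N, i ≠ j → x i t ≠ x j t) ∧
  ∀ i : Fin N, ∀ t ∈ Set.Ico (0 : ℝ) T,
    HasDerivWithinAt (x i)
      (∑ j ∈ Finset.univ.erase i, a j • gradPerp G (x i t - x j t))
      (Set.Ico 0 T) t

/-- The Euler kernel `G₁(r) = (1/(2π)) log(1/r)`, profile of the Green function of the
Laplacian on the plane. -/
def eulerKernel (r : ℝ) : ℝ := (1 / (2 * Real.pi)) * Real.log (1 / r)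

/-- The quasi-geostrophic kernels: `G₁(r) = (1/(2π)) log(1/r)` and, for `s ∈ (0,1)`,
`G_s(r) = (Γ(1−s)/(2^{2s} π Γ(s))) r^{−2(1−s)}`. -/
def sqgKernel (s : ℝ) (r : ℝ) : ℝ :=
  if s = 1 then eulerKernel r
  else (Real.Gamma (1 - s) / ((2 : ℝ) ^ (2 * s) * Real.pi * Real.Gamma s)) *
    r ^ (-(2 * (1 - s)))

/-! The time derivative of `Σᵢ aᵢ φ(xᵢ)` is `Σ_{i≠j} aᵢ aⱼ Dφ(xᵢ) ∇^⊥G₁(xᵢ − xⱼ)`. Since the Euler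
kernel field is odd, pairing the `(i, j)` and `(j, i)` terms turns it into
`½ Σ_{i≠j} aᵢ aⱼ (Dφ(xᵢ) − Dφ(xⱼ)) ∇^⊥G₁(xᵢ − xⱼ)`, and the singularity `|∇^⊥G₁(y)| = 1/(2π|y|)`
is cancelled by `‖Dφ(xᵢ) − Dφ(xⱼ)‖ ≤ ‖D²φ‖∞ |xᵢ − xⱼ|`. The resulting uniform bound on the
derivative makes the function Lipschitz, hence convergent as `t → T⁻`. -/

open Finset

lemma norm_perp (v : Plane) : ‖perp v‖ = ‖v‖ := by
  simp only [perp, EuclideanSpace.norm_eq, Real.norm_eq_abs, sq_abs, Fin.sum_univ_two,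
    Matrix.cons_val_zero, Matrix.cons_val_one]
  congr 1
  ring

lemma perp_neg (v : Plane) : perp (-v) = -perp v := by
  ext i
  fin_cases i <;> simp [perp]

lemma gradPerp_neg (G : ℝ → ℝ) (y : Plane) : gradPerp G (-y) = -gradPerp G y := by
  rw [gradPerp, gradPerp, norm_neg, perp_neg, smul_neg]

lemma deriv_eulerKernel {r : ℝ} (hr : r ≠ 0) : deriv eulerKernel r = -(1 / (2 * Real.pi)) / r := by
  have h : eulerKernel = fun s => -(1 / (2 * Real.pi)) * Real.log s := by
    funext s
    rw [eulerKernel, one_div s, Real.log_inv]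
    ring
  rw [h, deriv_const_mul _ (Real.differentiableAt_log hr), Real.deriv_log]
  field_simp

lemma norm_gradPerp_eulerKernel {y : Plane} (hy : y ≠ 0) :
    ‖gradPerp eulerKernel y‖ = 1 / (2 * Real.pi * ‖y‖) := by
  have hy' : ‖y‖ ≠ 0 := norm_ne_zero_iff.mpr hy
  rw [gradPerp, norm_smul, norm_perp, deriv_eulerKernel hy', Real.norm_eq_abs, abs_div, abs_div,
    abs_neg, abs_of_pos (by positivity : (0 : ℝ) < 1 / (2 * Real.pi)), abs_norm]
  field_simp

lemma norm_fderiv_sub_le_of_norm_iteratedFDeriv_two_le {E F : Type*} [NormedAddCommGroup E]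
    [NormedSpace ℝ E] [NormedAddCommGroup F] [NormedSpace ℝ F] {φ : E → F} (hφ : ContDiff ℝ 2 φ)
    {K : ℝ} (hK : ∀ y, ‖iteratedFDeriv ℝ 2 φ y‖ ≤ K) (u v : E) :
    ‖fderiv ℝ φ u - fderiv ℝ φ v‖ ≤ K * ‖u - v‖ := by
  have hDφ : Differentiable ℝ (fderiv ℝ φ) :=
    (hφ.fderiv_right (m := 1) le_rfl).differentiable one_ne_zero
  refine convex_univ.norm_image_sub_le_of_norm_fderiv_le (fun y _ => hDφ y) (fun y _ => ?_)
    (Set.mem_univ v) (Set.mem_univ u)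
  rw [← norm_iteratedFDeriv_one, norm_iteratedFDeriv_fderiv]
  exact hK y

lemma abs_fderiv_sub_fderiv_apply_gradPerp_eulerKernel_le {φ : Plane → ℝ} (hφ : ContDiff ℝ 2 φ)
    {K : ℝ} (hK : ∀ y : Plane, ‖iteratedFDeriv ℝ 2 φ y‖ ≤ K) {u v : Plane} (huv : u ≠ v) :
    |(fderiv ℝ φ u - fderiv ℝ φ v) (gradPerp eulerKernel (u - v))| ≤ K / (2 * Real.pi) := by
  have huv' : u - v ≠ 0 := sub_ne_zero.mpr huv
  have hpos : 0 < ‖u - v‖ := norm_pos_iff.mpr huv'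
  rw [← Real.norm_eq_abs]
  calc ‖(fderiv ℝ φ u - fderiv ℝ φ v) (gradPerp eulerKernel (u - v))‖
      ≤ ‖fderiv ℝ φ u - fderiv ℝ φ v‖ * ‖gradPerp eulerKernel (u - v)‖ :=
        ContinuousLinearMap.le_opNorm _ _
    _ ≤ K * ‖u - v‖ * (1 / (2 * Real.pi * ‖u - v‖)) := by
        rw [norm_gradPerp_eulerKernel huv']
        gcongr
        exact norm_fderiv_sub_le_of_norm_iteratedFDeriv_two_le hφ hK u v
    _ = K / (2 * Real.pi) := by field_simp

section PairSums

variable {ι : Type*} [Fintype ι] [DecidableEq ι]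

lemma sum_sum_erase_swap {M : Type*} [AddCommMonoid M] (f : ι → ι → M) :
    ∑ i, ∑ j ∈ univ.erase i, f j i = ∑ i, ∑ j ∈ univ.erase i, f i j :=
  sum_comm' fun i j => by simp [mem_erase, and_comm, eq_comm]

lemma two_mul_abs_sum_sum_erase_le {f c : ι → ι → ℝ}
    (h : ∀ i j, i ≠ j → |f i j + f j i| ≤ c i j) :
    2 * |∑ i, ∑ j ∈ univ.erase i, f i j| ≤ ∑ i, ∑ j ∈ univ.erase i, c i j := by
  have hsym : 2 * ∑ i, ∑ j ∈ univ.erase i, f i j = ∑ i, ∑ j ∈ univ.erase i, (f i j + f j i) := by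
    simp only [sum_add_distrib]
    rw [sum_sum_erase_swap f, two_mul]
  calc 2 * |∑ i, ∑ j ∈ univ.erase i, f i j|
      = |∑ i, ∑ j ∈ univ.erase i, (f i j + f j i)| := by
        rw [← hsym, abs_mul, abs_two]
    _ ≤ ∑ i, ∑ j ∈ univ.erase i, |f i j + f j i| :=
        (abs_sum_le_sum_abs _ _).trans (sum_le_sum fun i _ => abs_sum_le_sum_abs _ _)
    _ ≤ ∑ i, ∑ j ∈ univ.erase i, c i j :=
        sum_le_sum fun i _ => sum_le_sum fun j hj => h i j (ne_of_mem_erase hj).symm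

lemma abs_sum_sum_erase_fderiv_gradPerp_eulerKernel_le (a : ι → ℝ) {p : ι → Plane}
    (hp : Function.Injective p) {φ : Plane → ℝ} (hφ : ContDiff ℝ 2 φ) {K : ℝ}
    (hK : ∀ y : Plane, ‖iteratedFDeriv ℝ 2 φ y‖ ≤ K) :
    |∑ i, ∑ j ∈ univ.erase i, a i * a j * fderiv ℝ φ (p i) (gradPerp eulerKernel (p i - p j))| ≤
      1 / (4 * Real.pi) * (∑ i, ∑ j ∈ univ.erase i, |a i| * |a j|) * K := by
  have hpair : ∀ i j, i ≠ j →
      |a i * a j * fderiv ℝ φ (p i) (gradPerp eulerKernel (p i - p j)) +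
        a j * a i * fderiv ℝ φ (p j) (gradPerp eulerKernel (p j - p i))| ≤
      |a i| * |a j| * (K / (2 * Real.pi)) := by
    intro i j hij
    rw [← neg_sub (p i), gradPerp_neg, map_neg,
      show ∀ α β γ δ : ℝ, α * β * γ + β * α * -δ = α * β * (γ - δ) by intros; ring,
      ← sub_apply, abs_mul, abs_mul]
    gcongr
    exact abs_fderiv_sub_fderiv_apply_gradPerp_eulerKernel_le hφ hK (hp.ne hij)
  have h2 := two_mul_abs_sum_sum_erase_le hpair
  simp only [← sum_mul] at h2
  have hπ := Real.pi_pos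
  rw [show ∀ A : ℝ, 1 / (4 * Real.pi) * A * K = A * (K / (2 * Real.pi)) / 2 by
    intro A; field_simp; ring]
  linarith

end PairSums

lemma IsVortexSolution.hasDerivWithinAt_sum_mul_comp {N : ℕ} {a : Fin N → ℝ} {G : ℝ → ℝ} {T : ℝ}
    {x : Fin N → ℝ → Plane} (hsol : IsVortexSolution N a G T x) {φ : Plane → ℝ}
    (hφ : Differentiable ℝ φ) {t : ℝ} (ht : t ∈ Set.Ico 0 T) :
    HasDerivWithinAt (fun τ => ∑ i, a i * φ (x i τ))
      (∑ i, ∑ j ∈ univ.erase i, a i * a j * fderiv ℝ φ (x i t) (gradPerp G (x i t - x j t)))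
      (Set.Ico 0 T) t := by
  have hi : ∀ i, HasDerivWithinAt (fun τ => a i * φ (x i τ))
      (a i * fderiv ℝ φ (x i t) (∑ j ∈ univ.erase i, a j • gradPerp G (x i t - x j t)))
      (Set.Ico 0 T) t := fun i =>
    ((hφ _).hasFDerivAt.comp_hasDerivWithinAt t (hsol.2 i t ht)).const_mul (a i)
  refine (HasDerivWithinAt.fun_sum fun i _ => hi i).congr_deriv ?_
  simp only [map_sum, map_smul, smul_eq_mul, mul_sum, mul_assoc]

lemma Convex.lipschitzOnWith_toNNReal_of_exists_hasDerivWithinAt_norm_le {E : Type*}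
    [NormedAddCommGroup E] [NormedSpace ℝ E] {f : ℝ → E} {s : Set ℝ} (hs : Convex ℝ s) {C : ℝ}
    (hf : ∀ t ∈ s, ∃ v, HasDerivWithinAt f v s t ∧ ‖v‖ ≤ C) :
    LipschitzOnWith C.toNNReal f s := by
  choose! f' hf' hC using hf
  refine hs.lipschitzOnWith_of_nnnorm_hasDerivWithin_le hf' fun t ht => ?_
  rw [← NNReal.coe_le_coe, coe_nnnorm]
  exact (hC t ht).trans (Real.le_coe_toNNReal C)

lemma LipschitzOnWith.exists_tendsto_nhdsWithin {α : Type*} [PseudoMetricSpace α] {K : NNReal}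
    {f : α → ℝ} {s : Set α} (hf : LipschitzOnWith K f s) (a : α) :
    ∃ L, Tendsto f (nhdsWithin a s) (nhds L) := by
  obtain ⟨g, hg, hgf⟩ := hf.extend_real
  exact ⟨g a, (hg.continuous.continuousWithinAt (s := s) (x := a)).tendsto.congr'
    (eventually_nhdsWithin_of_forall fun _ hy => (hgf hy).symm)⟩

theorem vortex_distribution_lipschitz_bound_general
    (N : ℕ) (a : Fin N → ℝ)
    (T : ℝ) (x : Fin N → ℝ → Plane)
    (hsol : IsVortexSolution N a eulerKernel T x)
    (φ : Plane → ℝ) (hφ : ContDiff ℝ 2 φ)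
    (K : ℝ) (hK : ∀ y : Plane, ‖iteratedFDeriv ℝ 2 φ y‖ ≤ K) :
    (∀ t ∈ Set.Ico (0 : ℝ) T, ∃ v : ℝ,
        HasDerivWithinAt (fun τ => ∑ i : Fin N, a i * φ (x i τ)) v (Set.Ico 0 T) t ∧
        |v| ≤ (1 / (4 * Real.pi)) *
          (∑ i : Fin N, ∑ j ∈ Finset.univ.erase i, |a i| * |a j|) * K) ∧
    LipschitzOnWith
      (Real.toNNReal ((1 / (4 * Real.pi)) *
        (∑ i : Fin N, ∑ j ∈ Finset.univ.erase i, |a i| * |a j|) * K))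
      (fun t => ∑ i : Fin N, a i * φ (x i t)) (Set.Ico 0 T) ∧
    ∃ L : ℝ, Tendsto (fun t => ∑ i : Fin N, a i * φ (x i t))
      (nhdsWithin T (Set.Ico 0 T)) (nhds L) := by
  have hderiv : ∀ t ∈ Set.Ico (0 : ℝ) T, ∃ v : ℝ,
      HasDerivWithinAt (fun τ => ∑ i : Fin N, a i * φ (x i τ)) v (Set.Ico 0 T) t ∧
      |v| ≤ (1 / (4 * Real.pi)) * (∑ i : Fin N, ∑ j ∈ univ.erase i, |a i| * |a j|) * K := by
    intro t ht
    have hinj : Function.Injective fun i => x i t := fun i j hxij =>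
      by_contra fun hij => hsol.1 t ht i j hij hxij
    exact ⟨_, hsol.hasDerivWithinAt_sum_mul_comp (hφ.differentiable two_ne_zero) ht,
      abs_sum_sum_erase_fderiv_gradPerp_eulerKernel_le a hinj hφ hK⟩
  have hlip := (convex_Ico 0 T).lipschitzOnWith_toNNReal_of_exists_hasDerivWithinAt_norm_le hderiv
  exact ⟨hderiv, hlip, hlip.exists_tendsto_nhdsWithin T⟩

/-- Lipschitz bound for the vortex distribution tested against a `C²` function `φ` with
bounded second derivative, for the Euler point-vortex system: the derivative of
`t ↦ Σ_i a_i φ(x_i(t))` exists and is bounded by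
`(1/(4π)) (Σ_{i≠j} |a_i||a_j|) sup ‖D²φ‖`; in particular this function is Lipschitz on
`[0,T)` and converges as `t → T⁻`. -/
theorem vortex_distribution_lipschitz_bound
    (N : ℕ) (hN : 1 ≤ N) (a : Fin N → ℝ) (ha : ∀ i, a i ≠ 0)
    (T : ℝ) (hT : 0 < T) (x : Fin N → ℝ → Plane)
    (hsol : IsVortexSolution N a eulerKernel T x)
    (φ : Plane → ℝ) (hφ : ContDiff ℝ 2 φ)
    (K : ℝ) (hK : ∀ y : Plane, ‖iteratedFDeriv ℝ 2 φ y‖ ≤ K) :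
    (∀ t ∈ Set.Ico (0 : ℝ) T, ∃ v : ℝ,
        HasDerivWithinAt (fun τ => ∑ i : Fin N, a i * φ (x i τ)) v (Set.Ico 0 T) t ∧
        |v| ≤ (1 / (4 * Real.pi)) *
          (∑ i : Fin N, ∑ j ∈ Finset.univ.erase i, |a i| * |a j|) * K) ∧
    LipschitzOnWith
      (Real.toNNReal ((1 / (4 * Real.pi)) *
        (∑ i : Fin N, ∑ j ∈ Finset.univ.erase i, |a i| * |a j|) * K))
      (fun t => ∑ i : Fin N, a i * φ (x i t)) (Set.Ico 0 T) ∧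
    ∃ L : ℝ, Tendsto (fun t => ∑ i : Fin N, a i * φ (x i t))
      (nhdsWithin T (Set.Ico 0 T)) (nhds L) :=
  vortex_distribution_lipschitz_bound_general N a T x hsol φ hφ K hK
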